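/- arXiv:1201.2158 — 7 statements merged into one kernel-verified Lean document; each statement's English description precedes it below -/
import Mathlib

section
/- Let 0 < a ≤ 1 and A = {⌊n^{1/a}⌋ : n ∈ ℕ}. Then limsup_{n→∞} a_n/a_{n+1} = 1 (where a_n is the increasing enumeration of A) and the exponential density of A exists and equals a. -/
/-!
Put `c = 1 / a ≥ 1`. The elements of `A` in increasing order are `⌊(n + 1) ^ c⌋` for `n ≥ 0`:
they increase strictly since `x ^ c + 1 ≤ (x + 1) ^ c`. They are asymptotic to `n ^ c`, and so are
their successors, hence consecutive ratios tend to `1`. Moreover `⌊(j + 1) ^ c⌋ ≤ k` iff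
`j + 1 < (k + 1) ^ a`, so `A ∩ [1, k]` has `⌈(k + 1) ^ a⌉ - 1 ~ k ^ a` elements, and taking logarithms
preserves asymptotic equivalence to a quantity tending to infinity.
-/

open Filter Asymptotics Topology

lemma StrictMono.nth_mem_range_eq {f : ℕ → ℕ} (hf : StrictMono f) :
    Nat.nth (· ∈ Set.range f) = f := by
  have hinf : (Set.range f).Infinite := Set.infinite_range_of_injective hf.injective
  exact (Nat.nth_strictMono hinf).range_inj hf |>.mp (Nat.range_nth_of_infinite hinf)

section Asymptotics

lemma isEquivalent_natCast_add_rpow (b c : ℝ) :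
    (fun n : ℕ => ((n : ℝ) + b) ^ c) ~[atTop] fun n => (n : ℝ) ^ c :=
  (IsEquivalent.refl.add_const_of_norm_tendsto_atTop
    (tendsto_norm_atTop_atTop.comp tendsto_natCast_atTop_atTop)).rpow
    fun n => Nat.cast_nonneg n

lemma Asymptotics.IsEquivalent.comp_natCast_add_one_rpow {g : ℝ → ℝ}
    (hg : g ~[atTop] fun x => x) {c : ℝ} (hc : 0 < c) :
    (fun n : ℕ => g (((n : ℝ) + 1) ^ c)) ~[atTop] fun n => (n : ℝ) ^ c :=
  (hg.comp_tendsto ((tendsto_rpow_atTop hc).comp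
    (tendsto_atTop_add_const_right _ 1 tendsto_natCast_atTop_atTop))).trans
    (isEquivalent_natCast_add_rpow 1 c)

lemma tendsto_div_succ_of_isEquivalent {u v : ℕ → ℝ} (huv : u ~[atTop] v)
    (hv : (fun n => v (n + 1)) ~[atTop] v) (hv0 : ∀ᶠ n in atTop, v n ≠ 0) :
    Tendsto (fun n => u n / u (n + 1)) atTop (𝓝 1) := by
  have hratio : (fun n => u n / u (n + 1)) ~[atTop] v / v :=
    (huv.div (huv.comp_tendsto (tendsto_add_atTop_nat 1))).trans (IsEquivalent.refl.div hv)
  refine hratio.symm.tendsto_nhds (tendsto_const_nhds.congr' ?_)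
  filter_upwards [hv0] with n hn using (div_self hn).symm

lemma tendsto_log_div_log_of_isEquivalent_rpow {u : ℕ → ℝ} {b : ℝ} (hb : 0 < b)
    (hu : u ~[atTop] fun k => (k : ℝ) ^ b) :
    Tendsto (fun k => Real.log (u k) / Real.log k) atTop (𝓝 b) := by
  have hlog := (hu.log ((tendsto_rpow_atTop hb).comp tendsto_natCast_atTop_atTop)).div
    (IsEquivalent.refl (u := fun k : ℕ => Real.log k))
  refine hlog.symm.tendsto_nhds (tendsto_const_nhds.congr' ?_)
  filter_upwards [eventually_ge_atTop 2] with k hk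
  have hlogk : 0 < Real.log k := Real.log_pos (by exact_mod_cast hk)
  simp [Real.log_rpow (by positivity : (0 : ℝ) < k), hlogk.ne']

end Asymptotics

/-- The shift `n + 1` matches the `0`-based indexing of `Nat.nth`. -/
noncomputable def floorRpow (c : ℝ) (n : ℕ) : ℕ := ⌊((n : ℝ) + 1) ^ c⌋₊

section FloorRpow

variable {c : ℝ}

lemma range_floorRpow (c : ℝ) :
    Set.range (floorRpow c) = {m | ∃ n : ℕ, 1 ≤ n ∧ m = ⌊(n : ℝ) ^ c⌋₊} := by
  ext m
  constructor
  · rintro ⟨n, rfl⟩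
    exact ⟨n + 1, Nat.le_add_left 1 n, by simp [floorRpow]⟩
  · rintro ⟨n, hn, rfl⟩
    exact ⟨n - 1, by simp [floorRpow, Nat.cast_sub hn]⟩

lemma strictMono_floorRpow (hc : 1 ≤ c) : StrictMono (floorRpow c) := by
  refine strictMono_nat_of_lt_succ fun n => ?_
  have hsuperadd : ((n : ℝ) + 1) ^ c + 1 ≤ ((n : ℝ) + 1 + 1) ^ c := by
    simpa using Real.add_rpow_le_rpow_add (by positivity : (0 : ℝ) ≤ n + 1) zero_le_one hc
  calc floorRpow c n < ⌊((n : ℝ) + 1) ^ c⌋₊ + 1 := Nat.lt_add_one _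
    _ = ⌊((n : ℝ) + 1) ^ c + 1⌋₊ := (Nat.floor_add_one (by positivity)).symm
    _ ≤ floorRpow c (n + 1) := by
      rw [floorRpow, Nat.cast_succ]
      exact Nat.floor_le_floor hsuperadd

lemma one_le_floorRpow (hc : 0 ≤ c) (n : ℕ) : 1 ≤ floorRpow c n :=
  Nat.le_floor <| by
    simpa using Real.one_le_rpow (by simp : (1 : ℝ) ≤ n + 1) hc

lemma isEquivalent_floorRpow (hc : 0 < c) :
    (fun n => (floorRpow c n : ℝ)) ~[atTop] fun n => (n : ℝ) ^ c :=
  isEquivalent_nat_floor.comp_natCast_add_one_rpow hc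

lemma tendsto_floorRpow_div_succ (hc : 0 < c) :
    Tendsto (fun n => (floorRpow c n : ℝ) / floorRpow c (n + 1)) atTop (𝓝 1) := by
  refine tendsto_div_succ_of_isEquivalent (isEquivalent_floorRpow hc) ?_ ?_
  · simpa using isEquivalent_natCast_add_rpow 1 c
  · filter_upwards [eventually_ge_atTop 1] with n hn
    exact (Real.rpow_pos_of_pos (by exact_mod_cast hn) c).ne'

lemma floorRpow_le_iff (hc : 0 < c) (j k : ℕ) :
    floorRpow c j ≤ k ↔ (j : ℝ) + 1 < ((k : ℝ) + 1) ^ c⁻¹ := by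
  rw [floorRpow, ← Nat.lt_succ_iff, Nat.floor_lt (by positivity),
    Real.lt_rpow_inv_iff_of_pos (by positivity) (by positivity) hc]
  push_cast
  rfl

lemma ncard_range_floorRpow_inter_Icc (hc : 1 ≤ c) (k : ℕ) :
    (Set.range (floorRpow c) ∩ Set.Icc 1 k).ncard = ⌈((k : ℝ) + 1) ^ c⁻¹⌉₊ - 1 := by
  have hset : Set.range (floorRpow c) ∩ Set.Icc 1 k =
      floorRpow c '' Set.Iio (⌈((k : ℝ) + 1) ^ c⁻¹⌉₊ - 1) := by
    ext m
    simp only [Set.mem_inter_iff, Set.mem_range, Set.mem_Icc, Set.mem_image, Set.mem_Iio]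
    have hle (j : ℕ) : floorRpow c j ≤ k ↔ j < ⌈((k : ℝ) + 1) ^ c⁻¹⌉₊ - 1 := by
      rw [floorRpow_le_iff (by positivity), Nat.lt_sub_iff_add_lt, Nat.lt_ceil]
      push_cast
      rfl
    constructor
    · rintro ⟨⟨j, rfl⟩, -, hjk⟩
      exact ⟨j, (hle j).mp hjk, rfl⟩
    · rintro ⟨j, hj, rfl⟩
      exact ⟨⟨j, rfl⟩, one_le_floorRpow (by positivity) j, (hle j).mpr hj⟩
  rw [hset, Set.ncard_image_of_injective _ (strictMono_floorRpow hc).injective,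
    ← Finset.coe_range, Set.ncard_coe_finset, Finset.card_range]

end FloorRpow

lemma isEquivalent_natCeil_add_one_rpow_sub_one {b : ℝ} (hb : 0 < b) :
    (fun k : ℕ => ((⌈((k : ℝ) + 1) ^ b⌉₊ - 1 : ℕ) : ℝ)) ~[atTop] fun k => (k : ℝ) ^ b := by
  have hceil : (fun k : ℕ => (⌈((k : ℝ) + 1) ^ b⌉₊ : ℝ)) ~[atTop] fun k => (k : ℝ) ^ b :=
    isEquivalent_nat_ceil.comp_natCast_add_one_rpow hb
  refine (hceil.add_const_of_norm_tendsto_atTop (c := -1) (tendsto_norm_atTop_atTop.comp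
    ((tendsto_rpow_atTop hb).comp tendsto_natCast_atTop_atTop))).congr_left ?_
  refine Eventually.of_forall fun k => ?_
  dsimp only
  rw [Nat.cast_sub (Nat.one_le_ceil_iff.mpr (by positivity))]
  ring

/-- For `0 < a ≤ 1` and `A = {⌊n^(1/a)⌋ : n ≥ 1}`, the upper limit ratio of `A` is `1`
and the exponential density of `A` exists and equals `a`. -/
theorem limit_ratio_and_density_of_floor_pow (a : ℝ) (ha : a ∈ Set.Ioc (0 : ℝ) 1)
    (A : Set ℕ) (hA : A = {m : ℕ | ∃ n : ℕ, 1 ≤ n ∧ m = ⌊(n : ℝ) ^ (1 / a)⌋₊}) :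
    limsup (fun n : ℕ =>
        (Nat.nth (· ∈ A) n : ℝ) / (Nat.nth (· ∈ A) (n + 1) : ℝ)) atTop = 1 ∧
    Tendsto (fun k : ℕ => Real.log (Nat.card ↥(A ∩ Set.Icc 1 k)) / Real.log k)
      atTop (nhds a) := by
  obtain ⟨ha0, ha1⟩ := ha
  have hc : 1 ≤ 1 / a := one_le_one_div ha0 ha1
  rw [← range_floorRpow] at hA
  subst hA
  refine ⟨?_, ?_⟩
  · rw [(strictMono_floorRpow hc).nth_mem_range_eq]
    exact (tendsto_floorRpow_div_succ (by positivity)).limsup_eq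
  · have hcard (k : ℕ) :
        Nat.card ↥(Set.range (floorRpow (1 / a)) ∩ Set.Icc 1 k) = ⌈((k : ℝ) + 1) ^ a⌉₊ - 1 := by
      rw [Nat.card_coe_set_eq, ncard_range_floorRpow_inter_Icc hc, one_div, inv_inv]
    simp only [hcard]
    exact tendsto_log_div_log_of_isEquivalent_rpow ha0
      (isEquivalent_natCeil_add_one_rpow_sub_one ha0)
end

section
/- Let A = {2^n : n ∈ ℕ} ∪ {2^{2^N}+1 : N ∈ ℕ}. Then limsup_{n→∞} a_n/a_{n+1} = 1 and the exponential density of A exists and equals 0. -/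
/-!
Consecutive elements of `A` satisfy `a_n / a_{n+1} ≤ 1`, and the pairs `2^{2^N} < 2^{2^N} + 1` of
consecutive integers in `A` give ratios tending to `1`. Every element of `A` has the form `2^j`
or `2^j + 1`, so `A(k) ≤ 2 (log₂ k + 1) = O(log k)`, whence
`log A(k) / log k = O(log log k / log k)`.
-/

open Filter

theorem limsup_nth_div_nth_succ_eq_one {A : Set ℕ}
    (h : ∃ᶠ m in atTop, m ∈ A ∧ m + 1 ∈ A) :
    limsup (fun n : ℕ => (Nat.nth (· ∈ A) n : ℝ) / (Nat.nth (· ∈ A) (n + 1) : ℝ)) atTop = 1 := by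
  classical
  set f : ℕ → ℝ := fun n => (Nat.nth (· ∈ A) n : ℝ) / (Nat.nth (· ∈ A) (n + 1) : ℝ)
  have hinf : (Set.ofPred (· ∈ A)).Infinite :=
    Nat.frequently_atTop_iff_infinite.1 (h.mono fun _ hm => hm.1)
  have hf_nonneg : ∀ n, 0 ≤ f n := fun n => by positivity
  have hf_le_one : ∀ n, f n ≤ 1 := fun n =>
    div_le_one_of_le₀ (by exact_mod_cast (Nat.nth_strictMono hinf n.lt_succ_self).le)
      (by positivity)
  have hf_count : ∀ m, m ∈ A → m + 1 ∈ A → f (Nat.count (· ∈ A) m) = m / (m + 1) := by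
    intro m hm hm'
    have hcount : Nat.count (· ∈ A) (m + 1) = Nat.count (· ∈ A) m + 1 := by
      simp [Nat.count_succ, hm]
    simp only [f, Nat.nth_count hm, ← hcount, Nat.nth_count hm', Nat.cast_add, Nat.cast_one]
  have hcount_tendsto : Tendsto (Nat.count (· ∈ A)) atTop atTop :=
    tendsto_atTop_atTop_of_monotone (Nat.count_monotone _)
      fun n => ⟨Nat.nth (· ∈ A) n, (Nat.count_nth_of_infinite hinf n).ge⟩
  refine le_antisymm
    (limsup_le_of_le (isCoboundedUnder_le_of_le atTop hf_nonneg) (.of_forall hf_le_one)) ?_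
  refine le_of_forall_lt_imp_le_of_dense fun a ha => le_limsup_of_frequently_le ?_
    (isBoundedUnder_of ⟨1, hf_le_one⟩)
  have hclose : ∀ᶠ m : ℕ in atTop, a ≤ (m : ℝ) / (m + 1) :=
    (tendsto_natCast_div_add_atTop (1 : ℝ)).eventually (eventually_ge_nhds ha)
  refine hcount_tendsto.frequently ((h.and_eventually hclose).mono ?_)
  rintro m ⟨⟨hm, hm'⟩, ham⟩
  rwa [hf_count m hm hm']

theorem tendsto_log_div_of_le_mul {α : Type*} {l : Filter α} {c x : α → ℝ} {C : ℝ}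
    (hC : 0 < C) (hx : Tendsto x l atTop) (hc_one : ∀ᶠ a in l, 1 ≤ c a)
    (hc_le : ∀ᶠ a in l, c a ≤ C * x a) :
    Tendsto (fun a => Real.log (c a) / x a) l (nhds 0) := by
  have hupper : Tendsto (fun a => (Real.log C + Real.log (x a)) / x a) l (nhds 0) := by
    simpa only [add_div, zero_add, Function.comp_apply, id] using
      (tendsto_const_nhds.div_atTop hx).add
        (Real.isLittleO_log_id_atTop.tendsto_div_nhds_zero.comp hx)
  refine tendsto_of_tendsto_of_tendsto_of_le_of_le' tendsto_const_nhds hupper ?_ ?_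
  · filter_upwards [hc_one, hx.eventually_gt_atTop 0] with a h1 hx0
    exact div_nonneg (Real.log_nonneg h1) hx0.le
  · filter_upwards [hc_one, hc_le, hx.eventually_gt_atTop 0] with a h1 hle hx0
    gcongr
    calc Real.log (c a) ≤ Real.log (C * x a) := Real.log_le_log (by linarith) hle
      _ = Real.log C + Real.log (x a) := Real.log_mul hC.ne' hx0.ne'

theorem card_inter_Icc_le_of_forall_eq_two_pow_add {A : Set ℕ}
    (hA : ∀ m ∈ A, ∃ j, ∃ e < 2, m = 2 ^ j + e) (k : ℕ) :
    Nat.card ↥(A ∩ Set.Icc 1 k) ≤ 2 * (Nat.log 2 k + 1) := by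
  classical
  let B : Finset ℕ :=
    (Finset.range (Nat.log 2 k + 1) ×ˢ Finset.range 2).image fun p => 2 ^ p.1 + p.2
  have hsub : A ∩ Set.Icc 1 k ⊆ B := by
    rintro m ⟨hm, -, hmk⟩
    obtain ⟨j, e, he, rfl⟩ := hA m hm
    have hj : j ≤ Nat.log 2 k := Nat.le_log_of_pow_le one_lt_two (by omega)
    exact Finset.mem_image.2 ⟨(j, e), by simp [Nat.lt_succ_of_le hj, he], rfl⟩
  calc Nat.card ↥(A ∩ Set.Icc 1 k) ≤ (B : Set ℕ).ncard :=
        Set.ncard_le_ncard hsub B.finite_toSet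
    _ ≤ _ := by
      rw [Set.ncard_coe_finset]
      refine Finset.card_image_le.trans ?_
      simp [mul_comm]

theorem natLog_two_add_one_le_mul_log {k : ℕ} (hk : 2 ≤ k) :
    ((Nat.log 2 k + 1 : ℕ) : ℝ) ≤ 2 / Real.log 2 * Real.log k := by
  have hlogb : 1 ≤ Real.logb 2 k :=
    (Real.logb_self_eq_one one_lt_two).symm.le.trans
      (Real.logb_le_logb_of_le one_lt_two two_pos (by exact_mod_cast hk))
  calc ((Nat.log 2 k + 1 : ℕ) : ℝ) ≤ Real.logb 2 k + Real.logb 2 k := by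
        push_cast
        exact add_le_add (by exact_mod_cast Real.natLog_le_logb k 2) hlogb
    _ = 2 / Real.log 2 * Real.log k := by
        rw [Real.logb]; ring

def twoPowsAndFermats : Set ℕ :=
  {m : ℕ | ∃ n : ℕ, 1 ≤ n ∧ m = 2 ^ n} ∪
    {m : ℕ | ∃ N : ℕ, 1 ≤ N ∧ m = 2 ^ 2 ^ N + 1}

namespace twoPowsAndFermats

theorem frequently_mem_and_succ_mem :
    ∃ᶠ m in atTop, m ∈ twoPowsAndFermats ∧ m + 1 ∈ twoPowsAndFermats := by
  refine frequently_atTop.2 fun a => ⟨2 ^ 2 ^ (a + 1), ?_, ?_, ?_⟩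
  · have h₁ : a + 1 < 2 ^ (a + 1) := Nat.lt_two_pow_self
    have h₂ : 2 ^ (a + 1) < 2 ^ 2 ^ (a + 1) := Nat.lt_two_pow_self
    omega
  · exact Or.inl ⟨2 ^ (a + 1), Nat.one_le_two_pow, rfl⟩
  · exact Or.inr ⟨a + 1, a.succ_pos, rfl⟩

theorem exists_eq_two_pow_add {m : ℕ} (hm : m ∈ twoPowsAndFermats) :
    ∃ j, ∃ e < 2, m = 2 ^ j + e := by
  rcases hm with ⟨n, -, rfl⟩ | ⟨N, -, rfl⟩
  exacts [⟨n, 0, two_pos, rfl⟩, ⟨2 ^ N, 1, one_lt_two, rfl⟩]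

theorem one_le_card_inter_Icc {k : ℕ} (hk : 2 ≤ k) :
    1 ≤ Nat.card ↥(twoPowsAndFermats ∩ Set.Icc 1 k) := by
  have hfin : (twoPowsAndFermats ∩ Set.Icc 1 k).Finite :=
    (Set.finite_Icc 1 k).subset Set.inter_subset_right
  have h2 : 2 ∈ twoPowsAndFermats ∩ Set.Icc 1 k := ⟨Or.inl ⟨1, le_rfl, rfl⟩, by simp [hk]⟩
  exact (Set.ncard_pos hfin).2 ⟨2, h2⟩

theorem card_inter_Icc_le_mul_log {k : ℕ} (hk : 2 ≤ k) :
    (Nat.card ↥(twoPowsAndFermats ∩ Set.Icc 1 k) : ℝ) ≤ 4 / Real.log 2 * Real.log k := by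
  have hcard := card_inter_Icc_le_of_forall_eq_two_pow_add (fun _ => exists_eq_two_pow_add) k
  calc (Nat.card ↥(twoPowsAndFermats ∩ Set.Icc 1 k) : ℝ)
      ≤ 2 * ((Nat.log 2 k + 1 : ℕ) : ℝ) := by exact_mod_cast hcard
    _ ≤ 2 * (2 / Real.log 2 * Real.log k) := by
        gcongr; exact natLog_two_add_one_le_mul_log hk
    _ = 4 / Real.log 2 * Real.log k := by ring

end twoPowsAndFermats

open twoPowsAndFermats in
/-- For `A = {2^n : n ≥ 1} ∪ {2^(2^N) + 1 : N ≥ 1}`, the upper limit ratio is `1`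
and the exponential density exists and equals `0`. -/
theorem limit_ratio_one_density_zero (A : Set ℕ)
    (hA : A = {m : ℕ | ∃ n : ℕ, 1 ≤ n ∧ m = 2 ^ n} ∪
              {m : ℕ | ∃ N : ℕ, 1 ≤ N ∧ m = 2 ^ 2 ^ N + 1}) :
    limsup (fun n : ℕ =>
        (Nat.nth (· ∈ A) n : ℝ) / (Nat.nth (· ∈ A) (n + 1) : ℝ)) atTop = 1 ∧
    Tendsto (fun k : ℕ => Real.log (Nat.card ↥(A ∩ Set.Icc 1 k)) / Real.log k)
      atTop (nhds 0) := by
  change A = twoPowsAndFermats at hA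
  subst hA
  refine ⟨limsup_nth_div_nth_succ_eq_one frequently_mem_and_succ_mem,
    tendsto_log_div_of_le_mul (C := 4 / Real.log 2) (by positivity)
      (Real.tendsto_log_atTop.comp tendsto_natCast_atTop_atTop) ?_ ?_⟩
  · filter_upwards [eventually_ge_atTop 2] with k hk
    exact_mod_cast one_le_card_inter_Icc hk
  · filter_upwards [eventually_ge_atTop 2] with k hk
    exact card_inter_Icc_le_mul_log hk
end

section
/- With u_n = (1 + 1/√n)^n, one has u_{n+1} - u_n → +∞ as n → ∞; in particular ⌊u_n⌋ are pairwise distinct for all sufficiently large n. -/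
/-! With `a = √n` one has `u n = exp (a² log (1 + 1/a))`, and the bounds
`2s/(s+2) ≤ log (1 + s) ≤ s - s²/2 + s³/3` pin the exponent between `a - 1/2` and
`a - 1/2 + 1/(3a)`. As `√(n+1) - √n ≥ 1/(2√n + 1)`, the exponent grows by at least `1/(15√n)` from
`n` to `n + 1`, so by convexity of `exp` the increment `u (n+1) - u n` is at least
`exp (√n - 1/2) / (15√n) → ∞`. Once the increments exceed `1`, the floors strictly increase. -/

open Filter

theorem Real.log_one_add_le_cubic {x : ℝ} (hx : 0 ≤ x) :
    Real.log (1 + x) ≤ x - x ^ 2 / 2 + x ^ 3 / 3 := by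
  let g : ℝ → ℝ := fun t => t - t ^ 2 / 2 + t ^ 3 / 3 - Real.log (1 + t)
  have hg : ∀ t, 0 ≤ t → HasDerivAt g (t ^ 3 / (1 + t)) t := by
    intro t ht
    have hlog : HasDerivAt (fun t => Real.log (1 + t)) (1 / (1 + t)) t := by
      simpa using ((hasDerivAt_id t).const_add 1).log (by positivity)
    refine ((((hasDerivAt_id' t).sub ((hasDerivAt_pow 2 t).div_const 2)).add
      ((hasDerivAt_pow 3 t).div_const 3)).sub hlog).congr_deriv ?_
    field_simp
    ring
  have hmono : MonotoneOn g (Set.Ici 0) := by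
    refine monotoneOn_of_hasDerivWithinAt_nonneg (f' := fun t => t ^ 3 / (1 + t)) (convex_Ici 0)
      (fun t ht => (hg t ht).continuousAt.continuousWithinAt) (fun t ht => ?_) (fun t ht => ?_)
      <;> rw [interior_Ici] at ht
    · exact (hg t (le_of_lt ht)).hasDerivWithinAt
    · have : (0 : ℝ) < t := ht
      positivity
  have := hmono Set.self_mem_Ici hx hx
  simp only [g] at this
  norm_num at this
  linarith

noncomputable def sqMulLogOneAddInv (a : ℝ) : ℝ := a ^ 2 * Real.log (1 + 1 / a)

theorem one_add_one_div_sqrt_pow_eq_exp (n : ℕ) :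
    (1 + 1 / √(n : ℝ)) ^ n = Real.exp (sqMulLogOneAddInv √(n : ℝ)) := by
  rw [sqMulLogOneAddInv, Real.sq_sqrt n.cast_nonneg, Real.exp_nat_mul,
    Real.exp_log (by positivity)]

theorem sub_half_le_sqMulLogOneAddInv {a : ℝ} (ha : 0 < a) :
    a - 1 / 2 ≤ sqMulLogOneAddInv a := by
  have h := Real.le_log_one_add_of_nonneg (one_div_pos.2 ha).le
  have hrat : a - 1 / 2 ≤ a ^ 2 * (2 * (1 / a) / (1 / a + 2)) := by
    rw [show a ^ 2 * (2 * (1 / a) / (1 / a + 2)) = 2 * a ^ 2 / (2 * a + 1) by field_simp; ring,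
      le_div_iff₀ (by positivity)]
    nlinarith
  exact hrat.trans (mul_le_mul_of_nonneg_left h (sq_nonneg a))

theorem sqMulLogOneAddInv_le {a : ℝ} (ha : 0 < a) :
    sqMulLogOneAddInv a ≤ a - 1 / 2 + 1 / (3 * a) := by
  calc sqMulLogOneAddInv a
      ≤ a ^ 2 * (1 / a - (1 / a) ^ 2 / 2 + (1 / a) ^ 3 / 3) :=
        mul_le_mul_of_nonneg_left (Real.log_one_add_le_cubic (one_div_pos.2 ha).le) (sq_nonneg a)
    _ = a - 1 / 2 + 1 / (3 * a) := by field_simp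

theorem one_div_le_sqMulLogOneAddInv_sub {a b : ℝ} (ha : 2 ≤ a) (hb : 0 ≤ b)
    (hab : b ^ 2 = a ^ 2 + 1) :
    1 / (15 * a) ≤ sqMulLogOneAddInv b - sqMulLogOneAddInv a := by
  have ha0 : 0 < a := by linarith
  have hb0 : 0 < b := by nlinarith
  have hab' : a ≤ b := by nlinarith
  have hba : b ≤ a + 1 := by nlinarith
  have hgap : 1 / (2 * a + 1) ≤ b - a := by
    rw [div_le_iff₀ (by positivity)]
    nlinarith [mul_le_mul_of_nonneg_left hba (sub_nonneg.2 hab')]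
  have hrat : 1 / (15 * a) ≤ 1 / (2 * a + 1) - 1 / (3 * a) := by
    rw [div_sub_div _ _ (by positivity) (by positivity), div_le_div_iff₀ (by positivity) (by positivity)]
    nlinarith
  linarith [sub_half_le_sqMulLogOneAddInv hb0, sqMulLogOneAddInv_le ha0]

theorem Real.exp_mul_sub_le_exp_sub_exp (x y : ℝ) :
    Real.exp x * (y - x) ≤ Real.exp y - Real.exp x := by
  have h := mul_le_mul_of_nonneg_left (Real.add_one_le_exp (y - x)) (Real.exp_pos x).le
  rw [mul_add, ← Real.exp_add, add_sub_cancel] at h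
  linarith

theorem exp_div_le_one_add_one_div_sqrt_pow_succ_sub {n : ℕ} (hn : 4 ≤ n) :
    Real.exp (√(n : ℝ) - 1 / 2) / (15 * √(n : ℝ)) ≤
      (1 + 1 / √((n + 1 : ℕ) : ℝ)) ^ (n + 1) - (1 + 1 / √(n : ℝ)) ^ n := by
  set a := √(n : ℝ)
  have ha : 2 ≤ a := Real.le_sqrt_of_sq_le (by norm_num; exact_mod_cast hn)
  have hab : √((n + 1 : ℕ) : ℝ) ^ 2 = a ^ 2 + 1 := by
    rw [Real.sq_sqrt (by positivity), Real.sq_sqrt (by positivity)]; push_cast; ring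
  rw [one_add_one_div_sqrt_pow_eq_exp, one_add_one_div_sqrt_pow_eq_exp, div_eq_mul_one_div]
  calc Real.exp (a - 1 / 2) * (1 / (15 * a))
      ≤ Real.exp (sqMulLogOneAddInv a) *
          (sqMulLogOneAddInv √((n + 1 : ℕ) : ℝ) - sqMulLogOneAddInv a) := by
        refine mul_le_mul (Real.exp_le_exp.2 (sub_half_le_sqMulLogOneAddInv (by positivity)))
          (one_div_le_sqMulLogOneAddInv_sub ha (Real.sqrt_nonneg _) hab) (by positivity)
          (Real.exp_pos _).le
    _ ≤ _ := Real.exp_mul_sub_le_exp_sub_exp _ _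

theorem tendsto_exp_sub_half_div_atTop :
    Tendsto (fun x => Real.exp (x - 1 / 2) / (15 * x)) atTop atTop := by
  have h := (Real.tendsto_exp_div_pow_atTop 1).const_mul_atTop
    (show (0 : ℝ) < Real.exp (-(1 / 2)) / 15 by positivity)
  refine h.congr fun x => ?_
  rw [sub_eq_add_neg, Real.exp_add]
  ring

theorem Nat.floor_strictMonoOn_of_add_one_le {f : ℕ → ℝ} {N : ℕ} (hf0 : ∀ n ≥ N, 0 ≤ f n)
    (hf : ∀ n ≥ N, f n + 1 ≤ f (n + 1)) : StrictMonoOn (fun n => ⌊f n⌋₊) (Set.Ici N) :=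
  strictMonoOn_of_lt_add_one Set.ordConnected_Ici fun n _ hn _ =>
    Nat.lt_of_succ_le (by simpa only [Nat.floor_add_one (hf0 n hn)] using Nat.floor_mono (hf n hn))

/-- For `u n = (1 + 1/√n)^n`, the differences `u (n+1) - u n` tend to `+∞`; in particular
the floors `⌊u n⌋` are pairwise distinct for sufficiently large `n`. -/
theorem diff_tendsto_atTop_and_floors_distinct (u : ℕ → ℝ)
    (hu : ∀ n : ℕ, u n = (1 + 1 / Real.sqrt n) ^ n) :
    Tendsto (fun n => u (n + 1) - u n) atTop atTop ∧
    ∃ N : ℕ, ∀ m n : ℕ, N ≤ m → N ≤ n → ⌊u m⌋₊ = ⌊u n⌋₊ → m = n := by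
  have hdiff : Tendsto (fun n => u (n + 1) - u n) atTop atTop := by
    refine tendsto_atTop_mono' atTop (eventually_atTop.2 ⟨4, fun n hn => ?_⟩)
      (tendsto_exp_sub_half_div_atTop.comp
        (Real.tendsto_sqrt_atTop.comp tendsto_natCast_atTop_atTop))
    show _ ≤ u (n + 1) - u n
    rw [hu, hu]
    exact exp_div_le_one_add_one_div_sqrt_pow_succ_sub hn
  obtain ⟨N, hN⟩ := eventually_atTop.1 (hdiff.eventually_ge_atTop 1)
  refine ⟨hdiff, N, fun m n hm hn h => ?_⟩
  refine (Nat.floor_strictMonoOn_of_add_one_le (fun k _ => ?_) (fun k hk => ?_)).injOn hm hn h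
  · rw [hu]; positivity
  · linarith [hN k hk]
end

section
/- If A = {a_1 < a_2 < ...} ⊆ ℕ satisfies liminf_{n→∞} (a_{n+1}-a_n)/a_{n+1} > 0, then limsup_{n→∞} (log n)/(log a_n) = 0. -/
open Filter Real Topology Asymptotics

/-!
A gap ratio eventually above `c > 0` means `aₙ < (1 - c) aₙ₊₁`, so `log aₙ` eventually grows by
at least `-log (1 - c) > 0` per step, hence linearly in `n`; and `log n = o(n)`.
-/

theorem lt_one_sub_mul_of_lt_div {x y c : ℝ} (hy : 0 ≤ y) (hc : 0 < c) (h : c < (y - x) / y) :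
    x < (1 - c) * y := by
  rcases hy.eq_or_lt with rfl | hy
  · simp only [div_zero] at h
    exact absurd h hc.not_gt
  · linarith [(lt_div_iff₀ hy).1 h]

theorem exists_pos_eventually_log_add_le_log_succ {a : ℕ → ℕ}
    (h : 0 < liminf (fun n : ℕ => ((a (n + 1) : ℝ) - (a n : ℝ)) / (a (n + 1) : ℝ)) atTop) :
    ∃ δ > 0, ∀ᶠ n in atTop, log (a n) + δ ≤ log (a (n + 1)) := by
  obtain ⟨c, hc0, hc⟩ := exists_between (lt_min h one_pos)
  have hc1 : 0 < 1 - c := sub_pos.2 (hc.trans_le (min_le_right _ _))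
  have hbdd : IsBoundedUnder (· ≥ ·) atTop
      (fun n : ℕ => ((a (n + 1) : ℝ) - (a n : ℝ)) / (a (n + 1) : ℝ)) := by
    -- otherwise the liminf would be the junk value `0`
    by_contra hb
    rw [Real.liminf_of_not_isBoundedUnder hb] at h
    exact h.false
  have hstep : ∀ᶠ n in atTop, (a n : ℝ) < (1 - c) * a (n + 1) :=
    (eventually_lt_of_lt_liminf (hc.trans_le (min_le_left _ _)) hbdd).mono fun n hn =>
      lt_one_sub_mul_of_lt_div (Nat.cast_nonneg _) hc0 hn
  have hpos : ∀ᶠ n in atTop, (0 : ℝ) < a n := by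
    rw [← map_add_atTop_eq_nat 1]
    exact hstep.mono fun n hn => pos_of_mul_pos_right ((Nat.cast_nonneg _).trans_lt hn) hc1.le
  refine ⟨log (1 - c)⁻¹, log_pos ((one_lt_inv₀ hc1).2 (by linarith)), ?_⟩
  filter_upwards [hstep, hpos] with n hn ha
  rw [← log_mul ha.ne' (inv_pos.2 hc1).ne']
  exact log_le_log (mul_pos ha (inv_pos.2 hc1)) ((mul_inv_le_iff₀ hc1).2 (by linarith))

theorem add_mul_le_of_forall_add_le {u : ℕ → ℝ} {δ : ℝ} {N : ℕ}
    (h : ∀ n ≥ N, u n + δ ≤ u (n + 1)) (k : ℕ) : u N + k * δ ≤ u (N + k) := by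
  induction k with
  | zero => simp
  | succ k ih =>
    rw [Nat.cast_succ, ← add_assoc]
    linarith [h (N + k) (Nat.le_add_right N k)]

theorem eventually_mul_le_of_eventually_add_le {u : ℕ → ℝ} {δ : ℝ} (hδ : 0 < δ)
    (h : ∀ᶠ n in atTop, u n + δ ≤ u (n + 1)) : ∀ᶠ n in atTop, δ / 2 * n ≤ u n := by
  obtain ⟨N, hN⟩ := eventually_atTop.1 h
  filter_upwards [eventually_ge_atTop N,
    tendsto_natCast_atTop_atTop.eventually_ge_atTop (2 * (N * δ - u N) / δ)] with n hn hlarge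
  have hlin := add_mul_le_of_forall_add_le hN (n - N)
  rw [Nat.add_sub_cancel' hn, Nat.cast_sub hn] at hlin
  have := (div_le_iff₀ hδ).1 hlarge
  nlinarith

theorem tendsto_log_div_of_eventually_mul_le {u : ℕ → ℝ} {δ : ℝ} (hδ : 0 < δ)
    (hu : ∀ᶠ n in atTop, δ * n ≤ u n) :
    Tendsto (fun n : ℕ => log n / u n) atTop (𝓝 0) := by
  have hn : (fun n : ℕ => (n : ℝ)) =O[atTop] u := by
    refine IsBigO.of_bound δ⁻¹ (hu.mono fun n hn => ?_)
    rw [Real.norm_natCast, ← div_eq_inv_mul, le_div_iff₀ hδ]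
    exact (mul_comm (n : ℝ) δ ▸ hn).trans (le_abs_self _)
  exact ((isLittleO_log_id_atTop.comp_tendsto tendsto_natCast_atTop_atTop).trans_isBigO hn
    ).tendsto_div_nhds_zero

theorem tau_eq_zero_of_liminf_gap_ratio_pos_general (a : ℕ → ℕ)
    (h : 0 < liminf (fun n : ℕ => ((a (n + 1) : ℝ) - (a n : ℝ)) / (a (n + 1) : ℝ)) atTop) :
    limsup (fun n : ℕ => Real.log n / Real.log (a n)) atTop = 0 := by
  obtain ⟨δ, hδ, hstep⟩ := exists_pos_eventually_log_add_le_log_succ h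
  exact (tendsto_log_div_of_eventually_mul_le (half_pos hδ)
    (eventually_mul_le_of_eventually_add_le hδ hstep)).limsup_eq

/-- If `liminf gₙ/aₙ₊₁ > 0`, then the exponent of convergence of `A` is `0`. -/
theorem tau_eq_zero_of_liminf_gap_ratio_pos (a : ℕ → ℕ) (hmono : StrictMono a)
    (hpos : ∀ n, 0 < a n)
    (h : 0 < liminf (fun n : ℕ => ((a (n + 1) : ℝ) - (a n : ℝ)) / (a (n + 1) : ℝ)) atTop) :
    limsup (fun n : ℕ => Real.log n / Real.log (a n)) atTop = 0 :=
  tau_eq_zero_of_liminf_gap_ratio_pos_general a h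
end

section
/- Let A = {a_1 < a_2 < ...} ⊆ ℕ, α = liminf_{n→∞} n(a_{n+1}-a_n)/a_{n+1} and β = limsup_{n→∞} n(a_{n+1}-a_n)/a_n. Then 1/β ≤ liminf (log n)/(log a_n) ≤ limsup (log n)/(log a_n) ≤ 1/α, with the conventions 1/∞ = 0 and 1/0 = ∞. -/
/-!
Write `gₙ = aₙ₊₁ - aₙ`. Since `(y - x)/y ≤ log y - log x ≤ (y - x)/x`, the increments of
`log aₙ` lie between `gₙ/aₙ₊₁` and `gₙ/aₙ`. If eventually `n·gₙ/aₙ < s`, comparing with the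
harmonic series gives `log aₙ ≤ s log n + O(1)`, hence `liminf log n / log aₙ ≥ 1/s`;
symmetrically, `n·gₙ/aₙ₊₁ > c` eventually gives `log aₙ ≥ c log n - O(1)`, hence
`limsup log n / log aₙ ≤ 1/c`.
-/

open Filter Topology Real
open scoped NNReal ENNReal

lemma sub_div_le_log_sub_log {x y : ℝ} (hx : 0 < x) (hy : 0 < y) :
    (y - x) / y ≤ log y - log x := by
  have h := one_sub_inv_le_log_of_pos (div_pos hy hx)
  rwa [log_div hy.ne' hx.ne', inv_div, one_sub_div hy.ne'] at h

lemma log_sub_log_le_sub_div {x y : ℝ} (hx : 0 < x) (hy : 0 < y) :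
    log y - log x ≤ (y - x) / x := by
  have h := log_le_sub_one_of_pos (div_pos hy hx)
  rwa [log_div hy.ne' hx.ne', div_sub_one hx.ne'] at h

lemma harmonic_sub_harmonic_pred {n : ℕ} (hn : n ≠ 0) :
    (harmonic n : ℝ) - harmonic (n - 1) = (n : ℝ)⁻¹ := by
  obtain ⟨k, rfl⟩ := Nat.exists_eq_succ_of_ne_zero hn
  simp [harmonic_succ]

lemma exists_eventually_le_add_of_eventually_sub_le {L f : ℕ → ℝ}
    (h : ∀ᶠ n in atTop, L (n + 1) - L n ≤ f (n + 1) - f n) :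
    ∃ C, ∀ᶠ n in atTop, L n ≤ f n + C := by
  obtain ⟨n₀, hn₀⟩ := eventually_atTop.mp h
  refine ⟨L n₀ - f n₀, eventually_atTop.mpr ⟨n₀, fun n hn => ?_⟩⟩
  induction n, hn using Nat.le_induction with
  | base => linarith
  | succ n hn ih => linarith [hn₀ n hn]

lemma exists_eventually_le_mul_log_add {L : ℕ → ℝ} {s : ℝ} (hs : 0 ≤ s)
    (h : ∀ᶠ n in atTop, L (n + 1) - L n ≤ s / n) :
    ∃ C, ∀ᶠ n : ℕ in atTop, L n ≤ s * log n + C := by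
  have hinc : ∀ᶠ n in atTop, L (n + 1) - L n ≤
      s * harmonic (n + 1 - 1) - s * harmonic (n - 1) := by
    filter_upwards [h, eventually_ne_atTop 0] with n hn hn0
    rwa [← mul_sub, Nat.add_sub_cancel, harmonic_sub_harmonic_pred hn0, ← div_eq_mul_inv]
  obtain ⟨C, hC⟩ :=
    exists_eventually_le_add_of_eventually_sub_le (f := fun n => s * harmonic (n - 1)) hinc
  refine ⟨s + C, ?_⟩
  filter_upwards [hC, eventually_ne_atTop 0] with n hn hn0
  have hlog : log ↑(n - 1) ≤ log n := by
    rcases Nat.eq_zero_or_pos (n - 1) with h0 | h0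
    · simp [h0, log_natCast_nonneg]
    · exact log_le_log (by exact_mod_cast h0) (by exact_mod_cast n.sub_le 1)
  calc L n ≤ s * harmonic (n - 1) + C := hn
    _ ≤ s * (1 + log n) + C := by grw [harmonic_le_one_add_log, hlog]
    _ = s * log n + (s + C) := by ring

lemma exists_eventually_mul_log_add_le {L : ℕ → ℝ} {c : ℝ} (hc : 0 ≤ c)
    (h : ∀ᶠ n : ℕ in atTop, c / n ≤ L (n + 1) - L n) :
    ∃ C, ∀ᶠ n : ℕ in atTop, c * log n + C ≤ L n := by
  have hinc : ∀ᶠ n in atTop, c * harmonic (n + 1 - 1) - c * harmonic (n - 1) ≤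
      L (n + 1) - L n := by
    filter_upwards [h, eventually_ne_atTop 0] with n hn hn0
    rwa [← mul_sub, Nat.add_sub_cancel, harmonic_sub_harmonic_pred hn0, ← div_eq_mul_inv]
  obtain ⟨C, hC⟩ :=
    exists_eventually_le_add_of_eventually_sub_le (L := fun n => c * harmonic (n - 1)) hinc
  refine ⟨-C, ?_⟩
  filter_upwards [hC, eventually_ne_atTop 0] with n hn hn0
  have hlog := log_add_one_le_harmonic (n - 1)
  rw [Nat.sub_add_cancel (Nat.one_le_iff_ne_zero.mpr hn0)] at hlog
  calc c * log n + -C ≤ c * harmonic (n - 1) + -C := by grw [hlog]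
    _ ≤ L n := by linarith

lemma tendsto_div_mul_add_atTop {c : ℝ} (hc : c ≠ 0) (C : ℝ) :
    Tendsto (fun x : ℝ => x / (c * x + C)) atTop (𝓝 c⁻¹) := by
  have h : Tendsto (fun x : ℝ => c + C / x) atTop (𝓝 c) := by
    have hC : Tendsto (fun x : ℝ => C / x) atTop (𝓝 0) :=
      tendsto_const_nhds.div_atTop tendsto_id
    simpa using hC.const_add c
  refine (h.inv₀ hc).congr' ?_
  filter_upwards [eventually_gt_atTop 0] with x hx
  field_simp

lemma tendsto_log_div_mul_log_add {c : ℝ} (hc : c ≠ 0) (C : ℝ) :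
    Tendsto (fun n : ℕ => ENNReal.ofReal (log n / (c * log n + C))) atTop
      (𝓝 (ENNReal.ofReal c⁻¹)) :=
  (ENNReal.continuous_ofReal.tendsto _).comp
    ((tendsto_div_mul_add_atTop hc C).comp (tendsto_log_atTop.comp tendsto_natCast_atTop_atTop))

lemma ofReal_inv_le_liminf_log_div {L : ℕ → ℝ} {s C : ℝ} (hs : 0 < s)
    (hpos : ∀ᶠ n in atTop, 0 < L n) (h : ∀ᶠ n : ℕ in atTop, L n ≤ s * log n + C) :
    ENNReal.ofReal s⁻¹ ≤ liminf (fun n : ℕ => ENNReal.ofReal (log n / L n)) atTop := by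
  rw [← (tendsto_log_div_mul_log_add hs.ne' C).liminf_eq]
  refine liminf_le_liminf ?_
  filter_upwards [hpos, h] with n hn hLn
  gcongr

lemma limsup_log_div_le_ofReal_inv {L : ℕ → ℝ} {c C : ℝ} (hc : 0 < c)
    (h : ∀ᶠ n : ℕ in atTop, c * log n + C ≤ L n) :
    limsup (fun n : ℕ => ENNReal.ofReal (log n / L n)) atTop ≤ ENNReal.ofReal c⁻¹ := by
  rw [← (tendsto_log_div_mul_log_add hc.ne' C).limsup_eq]
  refine limsup_le_limsup ?_
  have hden : Tendsto (fun n : ℕ => c * log n + C) atTop atTop :=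
    tendsto_atTop_add_const_right _ C
      ((tendsto_log_atTop.comp tendsto_natCast_atTop_atTop).const_mul_atTop hc)
  filter_upwards [h, hden.eventually_gt_atTop 0] with n hn hpos
  gcongr

section ENNReal

variable {ι : Type*} {f : Filter ι} {v : ι → ℝ} {x : ℝ≥0∞}

lemma inv_limsup_ofReal_le
    (h : ∀ s : ℝ, 0 < s → (∀ᶠ i in f, v i < s) → ENNReal.ofReal s⁻¹ ≤ x) :
    (limsup (fun i => ENNReal.ofReal (v i)) f)⁻¹ ≤ x := by
  refine ENNReal.le_of_forall_nnreal_lt fun q hq => ?_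
  rcases eq_or_ne q 0 with rfl | hq0
  · simp
  have hs : (0 : ℝ) < (q : ℝ)⁻¹ := by positivity
  have hlim : limsup (fun i => ENNReal.ofReal (v i)) f < ENNReal.ofReal (q : ℝ)⁻¹ := by
    rwa [ENNReal.ofReal_inv_of_pos (by positivity), ENNReal.ofReal_coe_nnreal,
      ← ENNReal.lt_inv_iff_lt_inv]
  have hev : ∀ᶠ i in f, v i < (q : ℝ)⁻¹ :=
    (eventually_lt_of_limsup_lt hlim).mono fun i hi => (ENNReal.ofReal_lt_ofReal_iff hs).mp hi
  simpa using h _ hs hev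

lemma le_inv_liminf_ofReal
    (h : ∀ c : ℝ, 0 < c → (∀ᶠ i in f, c < v i) → x ≤ ENNReal.ofReal c⁻¹) :
    x ≤ (liminf (fun i => ENNReal.ofReal (v i)) f)⁻¹ := by
  rw [ENNReal.le_inv_iff_le_inv]
  refine ENNReal.le_of_forall_nnreal_lt fun q hq => ?_
  rcases eq_or_ne q 0 with rfl | hq0
  · simp
  have hc : (0 : ℝ) < q := by positivity
  have hev : ∀ᶠ i in f, (q : ℝ) < v i :=
    (eventually_lt_of_lt_liminf hq).mono fun i hi => by
      rwa [← ENNReal.ofReal_coe_nnreal, ENNReal.ofReal_lt_ofReal_iff_of_nonneg hc.le] at hi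
  rw [ENNReal.le_inv_iff_le_inv]
  simpa [ENNReal.ofReal_inv_of_pos hc] using h _ hc hev

end ENNReal

theorem exponential_density_bounds_general (a : ℕ → ℕ) (hmono : StrictMono a) :
    (limsup (fun n : ℕ =>
        ENNReal.ofReal ((n : ℝ) * (((a (n + 1) : ℝ) - a n) / (a n : ℝ)))) atTop)⁻¹ ≤
      liminf (fun n : ℕ => ENNReal.ofReal (Real.log n / Real.log (a n))) atTop ∧
    liminf (fun n : ℕ => ENNReal.ofReal (Real.log n / Real.log (a n))) atTop ≤
      limsup (fun n : ℕ => ENNReal.ofReal (Real.log n / Real.log (a n))) atTop ∧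
    limsup (fun n : ℕ => ENNReal.ofReal (Real.log n / Real.log (a n))) atTop ≤
      (liminf (fun n : ℕ =>
        ENNReal.ofReal ((n : ℝ) * (((a (n + 1) : ℝ) - a n) / (a (n + 1) : ℝ)))) atTop)⁻¹ := by
  have hcast (n : ℕ) : (n : ℝ) ≤ a n := by exact_mod_cast hmono.id_le n
  have hcast_succ (n : ℕ) : (a n : ℝ) ≤ a (n + 1) := by
    exact_mod_cast (hmono n.lt_succ_self).le
  have ha_pos : ∀ᶠ n : ℕ in atTop, (0 : ℝ) < a n := by
    filter_upwards [eventually_gt_atTop 0] with n hn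
    exact (Nat.cast_pos.mpr hn).trans_le (hcast n)
  have hlog_pos : ∀ᶠ n : ℕ in atTop, 0 < log (a n) := by
    filter_upwards [eventually_gt_atTop 1] with n hn
    exact log_pos ((Nat.one_lt_cast.mpr hn).trans_le (hcast n))
  refine ⟨inv_limsup_ofReal_le fun s hs hev => ?_, liminf_le_limsup,
    le_inv_liminf_ofReal fun c hc hev => ?_⟩
  · have hinc : ∀ᶠ n : ℕ in atTop, log (a (n + 1)) - log (a n) ≤ s / n := by
      filter_upwards [hev, ha_pos, eventually_gt_atTop 0] with n hn ha hn0
      calc log (a (n + 1)) - log (a n) ≤ ((a (n + 1) : ℝ) - a n) / a n :=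
            log_sub_log_le_sub_div ha (ha.trans_le (hcast_succ n))
        _ ≤ s / n := by rw [le_div_iff₀ (by positivity)]; linarith
    obtain ⟨C, hC⟩ :=
      exists_eventually_le_mul_log_add (L := fun n => log (a n)) hs.le hinc
    exact ofReal_inv_le_liminf_log_div hs hlog_pos hC
  · have hinc : ∀ᶠ n : ℕ in atTop, c / n ≤ log (a (n + 1)) - log (a n) := by
      filter_upwards [hev, ha_pos, eventually_gt_atTop 0] with n hn ha hn0
      calc c / n ≤ ((a (n + 1) : ℝ) - a n) / a (n + 1) := by
            rw [div_le_iff₀ (by positivity)]; linarith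
        _ ≤ log (a (n + 1)) - log (a n) :=
            sub_div_le_log_sub_log ha (ha.trans_le (hcast_succ n))
    obtain ⟨C, hC⟩ :=
      exists_eventually_mul_log_add_le (L := fun n => log (a n)) hc.le hinc
    exact limsup_log_div_le_ofReal_inv hc hC

/-- With `α = liminf n·gₙ/aₙ₊₁` and `β = limsup n·gₙ/aₙ` (in `[0,∞]`), one has
`1/β ≤ ε̲(A) ≤ ε̄(A) ≤ 1/α`, with the conventions `1/∞ = 0`, `1/0 = ∞`. -/
theorem exponential_density_bounds (a : ℕ → ℕ) (hmono : StrictMono a)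
    (hpos : ∀ n, 0 < a n) :
    (limsup (fun n : ℕ =>
        ENNReal.ofReal ((n : ℝ) * (((a (n + 1) : ℝ) - a n) / (a n : ℝ)))) atTop)⁻¹ ≤
      liminf (fun n : ℕ => ENNReal.ofReal (Real.log n / Real.log (a n))) atTop ∧
    liminf (fun n : ℕ => ENNReal.ofReal (Real.log n / Real.log (a n))) atTop ≤
      limsup (fun n : ℕ => ENNReal.ofReal (Real.log n / Real.log (a n))) atTop ∧
    limsup (fun n : ℕ => ENNReal.ofReal (Real.log n / Real.log (a n))) atTop ≤
      (liminf (fun n : ℕ =>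
        ENNReal.ofReal ((n : ℝ) * (((a (n + 1) : ℝ) - a n) / (a (n + 1) : ℝ)))) atTop)⁻¹ :=
  exponential_density_bounds_general a hmono
end

section
/- Let β ≥ 1 be real. If there exists a sequence (f_n) tending to 0 such that for all n ≥ 1, (a_{n+1}-a_n)/a_{n+1} ≤ (β/n)(1+f_n), then liminf_{n→∞} (log n)/(log a_n) ≥ 1/β. -/
open Filter Topology

/-! Fix `c > β`. The relative gap `yₙ = (aₙ₊₁ - aₙ)/aₙ₊₁` is at most `β(1 + fₙ)/n`, and
`log aₙ₊₁ - log aₙ ≤ yₙ/(1 - yₙ) ≈ β/n`, which for large `n` is below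
`c/(n+1) ≤ c (log (n+1) - log n)`. Telescoping gives `log aₙ ≤ c log n + O(1)`, hence the
liminf of `log n / log aₙ` is at least `1/c`; now let `c ↓ β`. -/

lemma Real.log_sub_log_le_of_sub_div_le {p q y : ℝ} (hp : 0 < p) (hq : 0 < q)
    (hgap : (q - p) / q ≤ y) (hy : y < 1) : Real.log q - Real.log p ≤ y / (1 - y) := by
  have hpq : 1 - y ≤ p / q := by rw [sub_div, div_self hq.ne'] at hgap; linarith
  have hqp : q / p ≤ 1 / (1 - y) := by
    rw [div_le_div_iff₀ hp (by linarith)]; rw [le_div_iff₀ hq] at hpq; linarith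
  calc Real.log q - Real.log p = Real.log (q / p) := (Real.log_div hq.ne' hp.ne').symm
    _ ≤ q / p - 1 := Real.log_le_sub_one_of_pos (div_pos hq hp)
    _ ≤ 1 / (1 - y) - 1 := by linarith
    _ = y / (1 - y) := by field_simp [(by linarith : 1 - y ≠ 0)]; ring

lemma Real.inv_add_one_le_log_add_one_sub_log {x : ℝ} (hx : 0 < x) :
    (x + 1)⁻¹ ≤ Real.log (x + 1) - Real.log x := by
  have := Real.one_sub_inv_le_log_of_pos (show 0 < (x + 1) / x by positivity)
  rw [Real.log_div (by positivity) hx.ne', inv_div] at this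
  calc (x + 1)⁻¹ = 1 - x / (x + 1) := by field_simp; ring
    _ ≤ _ := this

lemma exists_eventually_le_mul_add_of_eventually_sub_le {g t : ℕ → ℝ} {c : ℝ}
    (hstep : ∀ᶠ n in atTop, g (n + 1) - g n ≤ c * (t (n + 1) - t n)) :
    ∃ C, ∀ᶠ n in atTop, g n ≤ c * t n + C := by
  obtain ⟨N, hN⟩ := eventually_atTop.1 hstep
  refine ⟨g N - c * t N, eventually_atTop.2 ⟨N, fun n hn => ?_⟩⟩
  induction n, hn using Nat.le_induction with
  | base => linarith
  | succ n hn ih => linarith [hN n hn]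

lemma one_div_le_liminf_div_of_eventually_le {ι : Type*} {l : Filter ι} [l.NeBot]
    {t g : ι → ℝ} {c C : ℝ} (hc : 0 < c) (ht : Tendsto t l atTop)
    (hg : ∀ᶠ i in l, 0 < g i) (hgt : ∀ᶠ i in l, g i ≤ c * t i + C)
    (hbdd : IsBoundedUnder (· ≤ ·) l (fun i => t i / g i)) :
    1 / c ≤ liminf (fun i => t i / g i) l := by
  have hlim : Tendsto (fun i => t i / (c * t i + C)) l (𝓝 (1 / c)) := by
    have hden : Tendsto (fun i => c + C / t i) l (𝓝 c) := by
      simpa using tendsto_const_nhds.add (tendsto_const_nhds.div_atTop ht)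
    rw [one_div]
    refine (hden.inv₀ hc.ne').congr' ?_
    filter_upwards [ht.eventually_gt_atTop 0] with i hi
    field_simp
  have hle : ∀ᶠ i in l, t i / (c * t i + C) ≤ t i / g i := by
    filter_upwards [hg, hgt, ht.eventually_ge_atTop 0] with i hgi hgti hti
    exact div_le_div_of_nonneg_left hti hgi hgti
  calc 1 / c = liminf (fun i => t i / (c * t i + C)) l := hlim.liminf_eq.symm
    _ ≤ _ := liminf_le_liminf hle hlim.isBoundedUnder_ge hbdd.isCoboundedUnder_ge

lemma eventually_log_sub_log_le_of_gap_le {x f : ℕ → ℝ} {β c : ℝ} (hc : β < c) (hc0 : 0 ≤ c)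
    (hx : ∀ᶠ n in atTop, 0 < x n) (hf : Tendsto f atTop (𝓝 0))
    (hgap : ∀ᶠ n in atTop, (x (n + 1) - x n) / x (n + 1) ≤ β / n * (1 + f n)) :
    ∀ᶠ n in atTop, Real.log (x (n + 1)) - Real.log (x n)
      ≤ c * (Real.log ((n + 1 : ℕ) : ℝ) - Real.log n) := by
  set s : ℕ → ℝ := fun n => β * (1 + f n)
  have hs : Tendsto s atTop (𝓝 β) := by
    simpa using (tendsto_const_nhds (x := β)).mul ((tendsto_const_nhds (x := (1 : ℝ))).add hf)
  have hy : Tendsto (fun n : ℕ => s n / n) atTop (𝓝 0) :=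
    hs.div_atTop tendsto_natCast_atTop_atTop
  -- `(n + 1) yₙ / (1 - yₙ)` with `yₙ = sₙ / n`, the quantity to be compared with `c`
  have hlim : Tendsto (fun n : ℕ => s n * (1 + 1 / n) / (1 - s n / n)) atTop (𝓝 β) := by
    have := (hs.mul ((tendsto_const_nhds (x := (1 : ℝ))).add
      tendsto_one_div_atTop_nhds_zero_nat)).div ((tendsto_const_nhds (x := (1 : ℝ))).sub hy)
      (by norm_num)
    rwa [add_zero, sub_zero, mul_one, div_one] at this
  filter_upwards [hlim.eventually_lt_const hc, hy.eventually_lt_const one_pos, hx,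
    (tendsto_add_atTop_nat 1).eventually hx, hgap, eventually_gt_atTop 0]
    with n hsc hy1 hxn hxn1 hgapn hn
  have hnR : (0 : ℝ) < n := by exact_mod_cast hn
  have hy_compl : 0 < 1 - s n / n := by linarith
  push_cast
  have hgapn' : (x (n + 1) - x n) / x (n + 1) ≤ s n / n := by
    simpa [s, div_mul_eq_mul_div] using hgapn
  calc Real.log (x (n + 1)) - Real.log (x n) ≤ s n / n / (1 - s n / n) :=
        Real.log_sub_log_le_of_sub_div_le hxn hxn1 hgapn' hy1
    _ = s n * (1 + 1 / n) / (1 - s n / n) / (n + 1) := by field_simp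
    _ ≤ c / (n + 1) := by gcongr
    _ ≤ c * (Real.log (n + 1) - Real.log n) := by
        rw [div_eq_mul_inv]; gcongr; exact Real.inv_add_one_le_log_add_one_sub_log hnR

theorem lower_density_ge_of_gap_upper_bound_general (a : ℕ → ℕ) (hmono : StrictMono a)
    (β : ℝ) (hβ : 1 ≤ β) (f : ℕ → ℝ)
    (hf : Tendsto f atTop (nhds 0))
    (h : ∀ n : ℕ, 1 ≤ n →
      ((a (n + 1) : ℝ) - a n) / (a (n + 1) : ℝ) ≤ (β / n) * (1 + f n)) :
    1 / β ≤ liminf (fun n : ℕ => Real.log n / Real.log (a n)) atTop := by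
  have ha : ∀ᶠ n : ℕ in atTop, (2 : ℝ) ≤ n ∧ (n : ℝ) ≤ a n := by
    filter_upwards [eventually_ge_atTop 2] with n hn
    exact ⟨by exact_mod_cast hn, by exact_mod_cast hmono.le_apply⟩
  have hlog_pos : ∀ᶠ n in atTop, 0 < Real.log (a n) :=
    ha.mono fun n hn => Real.log_pos (by linarith)
  have hbdd : IsBoundedUnder (· ≤ ·) atTop (fun n : ℕ => Real.log n / Real.log (a n)) :=
    isBoundedUnder_of_eventually_le (a := 1) <| (ha.and hlog_pos).mono fun n hn =>
      div_le_one_of_le₀ (Real.log_le_log (by linarith) hn.1.2) hn.2.le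
  have key : ∀ c ∈ Set.Ioi β, 1 / c ≤ liminf (fun n : ℕ => Real.log n / Real.log (a n)) atTop := by
    intro c (hc : β < c)
    obtain ⟨C, hC⟩ := exists_eventually_le_mul_add_of_eventually_sub_le
      (g := fun n => Real.log (a n)) (t := fun n => Real.log n) <|
      eventually_log_sub_log_le_of_gap_le (x := fun n => (a n : ℝ)) hc (by linarith)
        (ha.mono fun n hn => by linarith) hf ((eventually_ge_atTop 1).mono h)
    exact one_div_le_liminf_div_of_eventually_le (by linarith)
      (Real.tendsto_log_atTop.comp tendsto_natCast_atTop_atTop) hlog_pos hC hbdd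
  have hinv : Tendsto (fun c : ℝ => 1 / c) (𝓝[>] β) (𝓝 (1 / β)) :=
    (continuousAt_const.div continuousAt_id (show β ≠ 0 by linarith)).tendsto.mono_left
      nhdsWithin_le_nhds
  exact le_of_tendsto hinv (eventually_nhdsWithin_of_forall key)

/-- If `gₙ/aₙ₊₁ ≤ (β/n)(1+fₙ)` for all `n ≥ 1` with `fₙ → 0` and `β ≥ 1`, then
the lower exponential density of `A` is at least `1/β`. -/
theorem lower_density_ge_of_gap_upper_bound (a : ℕ → ℕ) (hmono : StrictMono a)
    (hpos : ∀ n, 0 < a n) (β : ℝ) (hβ : 1 ≤ β) (f : ℕ → ℝ)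
    (hf : Tendsto f atTop (nhds 0))
    (h : ∀ n : ℕ, 1 ≤ n →
      ((a (n + 1) : ℝ) - a n) / (a (n + 1) : ℝ) ≤ (β / n) * (1 + f n)) :
    1 / β ≤ liminf (fun n : ℕ => Real.log n / Real.log (a n)) atTop :=
  lower_density_ge_of_gap_upper_bound_general a hmono β hβ f hf h
end

section
/- Let α ≥ 1 be real. If there exists a sequence (e_n) tending to 0 such that for all n ≥ 1, (a_{n+1}-a_n)/a_n ≥ (α/n)(1+e_n), then limsup_{n→∞} (log n)/(log a_n) ≤ 1/α. -/
open Filter Real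

/-!
For every `γ < α` the gap condition eventually gives `a (n+1) ≥ (1 + γ'/n) a n` with
`γ < γ' < α`, hence `log a (n+1) - log a n ≥ γ'/(n + γ') ≥ γ/n ≥ γ (log (n+1) - log n)`.
Telescoping yields `log a n ≥ γ log n - C`, so `log n / log a n ≤ 1/γ + o(1)`; now let `γ → α`.
-/

lemma Real.log_add_one_sub_log_le {x : ℝ} (hx : 0 < x) : log (x + 1) - log x ≤ x⁻¹ := by
  have := log_le_sub_one_of_pos (div_pos (by linarith : 0 < x + 1) hx)
  rwa [log_div (by positivity) hx.ne', add_div, div_self hx.ne', one_div, add_sub_cancel_left]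
    at this

lemma Real.one_sub_div_le_log_sub_log {x y : ℝ} (hx : 0 < x) (hy : 0 < y) :
    1 - x / y ≤ log y - log x := by
  simpa [log_div hy.ne' hx.ne'] using one_sub_inv_le_log_of_pos (div_pos hy hx)

lemma mul_log_add_one_sub_log_le_log_sub_log {γ γ' t x y : ℝ} (hγ : 0 < γ) (hγγ' : γ < γ')
    (ht : γ * γ' ≤ t * (γ' - γ)) (hx : 0 ≤ x) (hxy : γ' / t ≤ (y - x) / x) :
    γ * (log (t + 1) - log t) ≤ log y - log x := by
  have hγt : γ < t := by nlinarith
  have ht0 : 0 < t := hγ.trans hγt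
  have hx0 : 0 < x := hx.lt_of_ne' fun h => by
    simp only [h, div_zero] at hxy
    exact (div_pos (hγ.trans hγγ') ht0).not_ge hxy
  have hy : (t + γ') * x ≤ t * y := by
    rw [div_le_div_iff₀ ht0 hx0] at hxy
    linarith
  have hy0 : 0 < y := by nlinarith
  -- `(t - γ)(t + γ') ≥ t²` is exactly the hypothesis `γ γ' ≤ t (γ' - γ)`
  have hratio : γ / t ≤ 1 - x / y := by
    rw [div_le_iff₀ ht0, sub_mul, div_mul_eq_mul_div, le_sub_iff_add_le, ← le_sub_iff_add_le',
      div_le_iff₀ hy0]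
    nlinarith
  calc γ * (log (t + 1) - log t) ≤ γ * t⁻¹ := by gcongr; exact log_add_one_sub_log_le ht0
    _ = γ / t := div_eq_mul_inv γ t |>.symm
    _ ≤ 1 - x / y := hratio
    _ ≤ log y - log x := one_sub_div_le_log_sub_log hx0 hy0

lemma exists_eventually_sub_le_of_eventually_sub_succ_le {u v : ℕ → ℝ}
    (h : ∀ᶠ n in atTop, u (n + 1) - u n ≤ v (n + 1) - v n) :
    ∃ C, ∀ᶠ n in atTop, u n - C ≤ v n := by
  obtain ⟨N, hN⟩ := h.exists_forall_of_atTop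
  refine ⟨u N - v N, eventually_atTop.2 ⟨N, fun n hn => ?_⟩⟩
  induction n, hn using Nat.le_induction with
  | base => linarith
  | succ n hn ih => linarith [hN n hn]

lemma eventually_div_le_of_mul_sub_le {ι : Type*} {l : Filter ι} {f g : ι → ℝ} {γ c C : ℝ}
    (hf : Tendsto f l atTop) (hc : 0 < c) (hγc : c⁻¹ < γ)
    (hg : ∀ᶠ i in l, γ * f i - C ≤ g i) :
    ∀ᶠ i in l, 0 ≤ f i / g i ∧ f i / g i ≤ c := by
  filter_upwards [hg, hf.eventually_ge_atTop (C / (γ - c⁻¹)), hf.eventually_gt_atTop 0]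
    with i hgi hCi hfi
  have hfg : c⁻¹ * f i ≤ g i := by
    rw [div_le_iff₀ (sub_pos.2 hγc)] at hCi
    linarith
  have hg0 : 0 < g i := lt_of_lt_of_le (by positivity) hfg
  refine ⟨by positivity, (div_le_iff₀ hg0).2 ?_⟩
  rwa [inv_mul_le_iff₀ hc] at hfg

lemma limsup_div_le_inv_of_forall_lt {ι : Type*} {l : Filter ι} [l.NeBot] {f g : ι → ℝ}
    {α : ℝ} (hf : Tendsto f l atTop) (hα : 0 < α)
    (hg : ∀ γ, 0 < γ → γ < α → ∃ C, ∀ᶠ i in l, γ * f i - C ≤ g i) :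
    limsup (fun i => f i / g i) l ≤ α⁻¹ := by
  refine le_of_forall_gt_imp_ge_of_dense fun c hc => ?_
  have hc0 : 0 < c := (inv_pos.2 hα).trans hc
  obtain ⟨γ, hcγ, hγα⟩ := exists_between ((inv_lt_comm₀ hα hc0).1 hc)
  obtain ⟨C, hC⟩ := hg γ ((inv_pos.2 hc0).trans hcγ) hγα
  have hev := eventually_div_le_of_mul_sub_le hf hc0 hcγ hC
  exact limsup_le_of_le (isCoboundedUnder_le_of_eventually_le l (hev.mono fun _ => And.left))
    (hev.mono fun _ => And.right)

theorem upper_density_le_of_gap_lower_bound'_general (a : ℕ → ℕ)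
    (α : ℝ) (hα : 1 ≤ α) (e : ℕ → ℝ)
    (he : Tendsto e atTop (nhds 0))
    (h : ∀ n : ℕ, 1 ≤ n →
      (α / n) * (1 + e n) ≤ ((a (n + 1) : ℝ) - a n) / (a n : ℝ)) :
    limsup (fun n : ℕ => Real.log n / Real.log (a n)) atTop ≤ 1 / α := by
  have hα0 : 0 < α := zero_lt_one.trans_le hα
  rw [one_div]
  refine limsup_div_le_inv_of_forall_lt (tendsto_log_atTop.comp tendsto_natCast_atTop_atTop) hα0
    fun γ hγ hγα => exists_eventually_sub_le_of_eventually_sub_succ_le ?_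
  obtain ⟨γ', hγγ', hγ'α⟩ := exists_between hγα
  have hen : ∀ᶠ n in atTop, γ' / α - 1 ≤ e n :=
    he.eventually_const_le (by linarith [(div_lt_one hα0).2 hγ'α])
  have hn : ∀ᶠ n : ℕ in atTop, γ * γ' ≤ n * (γ' - γ) :=
    (tendsto_natCast_atTop_atTop.eventually_ge_atTop (γ * γ' / (γ' - γ))).mono fun n hn =>
      (div_le_iff₀ (sub_pos.2 hγγ')).1 hn
  filter_upwards [hen, hn, eventually_ge_atTop 1] with n hen hn hn1
  have hgap : γ' / n ≤ α / n * (1 + e n) :=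
    calc γ' / n = α * (γ' / α) / n := by rw [mul_div_cancel₀ _ hα0.ne']
      _ ≤ α * (1 + e n) / n := by gcongr; linarith
      _ = α / n * (1 + e n) := by ring
  push_cast
  rw [← mul_sub]
  exact mul_log_add_one_sub_log_le_log_sub_log hγ hγγ' hn (Nat.cast_nonneg _)
    (hgap.trans (h n hn1))

/-- If `gₙ/aₙ ≥ (α/n)(1+eₙ)` for all `n ≥ 1` with `eₙ → 0` and `α ≥ 1`, then
the upper exponential density of `A` is at most `1/α`. -/
theorem upper_density_le_of_gap_lower_bound' (a : ℕ → ℕ) (hmono : StrictMono a)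
    (hpos : ∀ n, 0 < a n) (α : ℝ) (hα : 1 ≤ α) (e : ℕ → ℝ)
    (he : Tendsto e atTop (nhds 0))
    (h : ∀ n : ℕ, 1 ≤ n →
      (α / n) * (1 + e n) ≤ ((a (n + 1) : ℝ) - a n) / (a n : ℝ)) :
    limsup (fun n : ℕ => Real.log n / Real.log (a n)) atTop ≤ 1 / α :=
  upper_density_le_of_gap_lower_bound'_general a α hα e he h
end
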